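/- arXiv:2305.11741 — 4 statements merged into one kernel-verified Lean document; each statement's English description precedes it below -/
import Mathlib

section
/- If p* = inf S for a nonempty S ⊆ [0,1] with p* > 0, and for every δ > 0 there exist s ∈ S and a ∈ (p*/2, 1] with s < p* + δ and s ≥ a + p*·(1−a), then p* = 1. -/
theorem stmt_1 (S : Set ℝ) (hne : S.Nonempty) (hsub : S ⊆ Set.Icc (0:ℝ) 1)
    (p : ℝ) (hp : p = sInf S) (hpos : 0 < p)
    (h : ∀ δ : ℝ, 0 < δ → ∃ s ∈ S, ∃ a : ℝ, p / 2 < a ∧ a ≤ 1 ∧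
      s < p + δ ∧ a + p * (1 - a) ≤ s) :
    p = 1 := by
  have hbdd : BddBelow S := ⟨0, fun x hx => (hsub hx).1⟩
  have hple : p ≤ 1 := by
    obtain ⟨s, hs⟩ := hne
    calc p ≤ s := hp ▸ csInf_le hbdd hs
    _ ≤ 1 := (hsub hs).2
  by_contra hne1
  have h1p : 0 < 1 - p := by
    rcases lt_or_eq_of_le hple with h' | h'
    · linarith
    · exact absurd h' hne1
  obtain ⟨s, hsS, a, ha1, ha2, hs1, hs2⟩ := h (p * (1 - p) / 2) (by positivity)
  nlinarith
end

section
/- Let V : A → ℕ assign to each element of a set A a natural number value, and let μ be a finite multi-distribution on A, i.e., a finite multiset of pairs (p, a) with 0 < p ≤ 1 and Σ p = 1. Suppose every element a with V(a) ≥ 1 has, in one step, a successor distribution containing some element b with probability ≥ p_min and V(b) ≤ V(a) − 1, where 0 < p_min ≤ 1. Then, abstractly formulated for a single element a with V(a) ≤ N: iterating this step N times, the probability of reaching an element of value 0 within N steps is at least p_min^N. -/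
/-- Probability of reaching an element of value 0 within `n` steps, where
`μ a` is the successor distribution of `a` and elements of value 0 are absorbing. -/
noncomputable def reachProb {A : Type*} (V : A → ℕ) (μ : A → List (ℝ × A)) :
    ℕ → A → ℝ
  | 0, a => if V a = 0 then 1 else 0
  | n + 1, a =>
      if V a = 0 then 1
      else ((μ a).map (fun pb => pb.1 * reachProb V μ n pb.2)).sum

theorem stmt_3 {A : Type*} (V : A → ℕ) (μ : A → List (ℝ × A)) (pmin : ℝ)
    (hp0 : 0 < pmin) (hp1 : pmin ≤ 1)
    (hpos : ∀ a, ∀ pb ∈ μ a, 0 < pb.1 ∧ pb.1 ≤ 1)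
    (hsum : ∀ a, ((μ a).map Prod.fst).sum = 1)
    (hwit : ∀ a, 1 ≤ V a → ∃ pb ∈ μ a, pmin ≤ pb.1 ∧ V pb.2 + 1 ≤ V a) :
    ∀ (N : ℕ) (a : A), V a ≤ N → pmin ^ N ≤ reachProb V μ N a := by
  have hnn : ∀ n a, 0 ≤ reachProb V μ n a := by
    intro n
    induction n with
    | zero => intro a; simp [reachProb]; split <;> norm_num
    | succ n ih =>
      intro a
      rw [reachProb]
      split
      · norm_num
      · apply List.sum_nonneg
        intro x hx
        simp only [List.mem_map] at hx
        obtain ⟨pb, hpb, rfl⟩ := hx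
        exact mul_nonneg (hpos a pb hpb).1.le (ih pb.2)
  intro N
  induction N with
  | zero =>
    intro a ha
    simp [reachProb, Nat.le_zero.mp ha]
  | succ n ih =>
    intro a ha
    rw [reachProb]
    split
    · exact pow_le_one₀ hp0.le hp1
    · rename_i hV
      obtain ⟨pb, hpb, hple, hVle⟩ := hwit a (Nat.one_le_iff_ne_zero.mpr hV)
      have hterm : pmin ^ (n + 1) ≤ pb.1 * reachProb V μ n pb.2 := by
        rw [pow_succ, mul_comm]
        exact mul_le_mul hple (ih pb.2 (by omega)) (pow_nonneg hp0.le n)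
          (hpos a pb hpb).1.le
      refine hterm.trans (List.single_le_sum ?_ _ ?_)
      · intro x hx
        simp only [List.mem_map] at hx
        obtain ⟨qb, hqb, rfl⟩ := hx
        exact mul_nonneg (hpos a qb hqb).1.le (hnn n qb.2)
      · exact List.mem_map.mpr ⟨pb, hpb, rfl⟩
end

section
/- Let Pol be an assignment of weakly monotonic multilinear polynomials over ℕ to function symbols, extended homomorphically to terms. If s rewrites to the multi-distribution {p₁:t₁,...,p_k:t_k} by applying a probabilistic rule ℓ → {p₁:r₁,...,p_k:r_k} at some position π (so s|_π = ℓσ and t_j = s[r_jσ]_π), and if Pol(ℓ) ≥ Σ_j p_j·Pol(r_j) holds for all variable instantiations, then Pol(s) ≥ Σ_j p_j·Pol(t_j). -/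
/-- First-order terms over a signature `F` with arities `ar`. -/
inductive PTerm (F : Type) (ar : F → ℕ) : Type where
  | var : ℕ → PTerm F ar
  | app : (f : F) → (Fin (ar f) → PTerm F ar) → PTerm F ar

namespace PTerm

/-- Homomorphic extension of an interpretation `Pol` of the function symbols
to terms, under a variable assignment `α`. -/
noncomputable def eval {F : Type} {ar : F → ℕ}
    (Pol : (f : F) → (Fin (ar f) → ℝ) → ℝ) (α : ℕ → ℝ) : PTerm F ar → ℝ
  | var n => α n
  | app f ts => Pol f (fun i => eval Pol α (ts i))

/-- Application of a substitution to a term. -/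
def subst {F : Type} {ar : F → ℕ} (σ : ℕ → PTerm F ar) :
    PTerm F ar → PTerm F ar
  | var n => σ n
  | app f ts => app f (fun i => subst σ (ts i))

/-- `RewriteAt u v s t` means that `s` contains `u` at some position `π` and
each `t j` is obtained from `s` by replacing `u` at that same position by
`v j`. -/
inductive RewriteAt {F : Type} {ar : F → ℕ} {k : ℕ}
    (u : PTerm F ar) (v : Fin k → PTerm F ar) :
    PTerm F ar → (Fin k → PTerm F ar) → Prop
  | root : RewriteAt u v u v
  | congr (f : F) (ts : Fin (ar f) → PTerm F ar) (i : Fin (ar f))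
      (ti' : Fin k → PTerm F ar) :
      RewriteAt u v (ts i) ti' →
      RewriteAt u v (app f ts)
        (fun j => app f (Function.update ts i (ti' j)))

end PTerm

/-!
Induction on the rewrite position. At the root the claim is the rule's condition, instantiated
at the natural-number values of the terms `σ n`. Below a symbol `f`, multilinearity makes `Pol f` affine in
the rewritten argument, so the expectation over the `k` outcomes moves inside `Pol f`, and weak
monotonicity of `Pol f` turns the induction hypothesis into the claim.
-/

def IsNatMultilinear {ι : Type*} [Fintype ι] (P : (ι → ℝ) → ℝ) : Prop :=
  ∃ c : Finset ι → ℕ, ∀ x, P x = ∑ S, (c S : ℝ) * ∏ i ∈ S, x i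

namespace IsNatMultilinear

variable {ι : Type*} [Fintype ι] {P : (ι → ℝ) → ℝ}

theorem nonneg (hP : IsNatMultilinear P) {x : ι → ℝ} (hx : ∀ i, 0 ≤ x i) : 0 ≤ P x := by
  obtain ⟨c, hc⟩ := hP
  rw [hc]
  exact Finset.sum_nonneg fun S _ =>
    mul_nonneg (Nat.cast_nonneg _) (Finset.prod_nonneg fun i _ => hx i)

theorem exists_apply_natCast_eq (hP : IsNatMultilinear P) (m : ι → ℕ) :
    ∃ k : ℕ, P (fun i => (m i : ℝ)) = k := by
  obtain ⟨c, hc⟩ := hP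
  exact ⟨∑ S, c S * ∏ i ∈ S, m i, by rw [hc]; push_cast; rfl⟩

theorem exists_update_eq_add_mul [DecidableEq ι] (hP : IsNatMultilinear P) (x : ι → ℝ)
    (i : ι) : ∃ A B : ℝ, ∀ a, P (Function.update x i a) = A + B * a := by
  obtain ⟨c, hc⟩ := hP
  refine ⟨∑ S with i ∉ S, (c S : ℝ) * ∏ j ∈ S, x j,
    ∑ S with i ∈ S, (c S : ℝ) * ∏ j ∈ S.erase i, x j, fun a => ?_⟩
  rw [hc, ← Finset.sum_filter_not_add_sum_filter _ (i ∈ ·), Finset.sum_mul]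
  congr 1
  · refine Finset.sum_congr rfl fun S hS => ?_
    refine congrArg _ (Finset.prod_congr rfl fun j hj => Function.update_of_ne ?_ a x)
    rintro rfl
    exact (Finset.mem_filter.mp hS).2 hj
  · refine Finset.sum_congr rfl fun S hS => ?_
    rw [← Finset.mul_prod_erase _ _ (Finset.mem_filter.mp hS).2, Function.update_self,
      Finset.prod_congr rfl fun j hj =>
        Function.update_of_ne (Finset.ne_of_mem_erase hj) a x]
    ring

theorem sum_mul_update [DecidableEq ι] (hP : IsNatMultilinear P) (x : ι → ℝ) (i : ι)
    {k : ℕ} (p : Fin k → ℝ) (hps : ∑ j, p j = 1) (a : Fin k → ℝ) :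
    ∑ j, p j * P (Function.update x i (a j)) =
      P (Function.update x i (∑ j, p j * a j)) := by
  obtain ⟨A, B, hAB⟩ := hP.exists_update_eq_add_mul x i
  simp only [hAB, mul_add, Finset.sum_add_distrib, ← Finset.sum_mul, hps, one_mul,
    Finset.mul_sum, mul_left_comm]

end IsNatMultilinear

namespace PTerm

variable {F : Type} {ar : F → ℕ} {Pol : (f : F) → (Fin (ar f) → ℝ) → ℝ}

theorem eval_subst (β : ℕ → ℝ) (σ : ℕ → PTerm F ar) (t : PTerm F ar) :
    eval Pol β (subst σ t) = eval Pol (fun n => eval Pol β (σ n)) t := by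
  induction t with
  | var n => rfl
  | app f ts ih => simp only [subst, eval, ih]

theorem eval_app_update (β : ℕ → ℝ) (f : F) (ts : Fin (ar f) → PTerm F ar) (i : Fin (ar f))
    (u : PTerm F ar) :
    eval Pol β (app f (Function.update ts i u)) =
      Pol f (Function.update (fun i' => eval Pol β (ts i')) i (eval Pol β u)) := by
  simp only [eval, Function.apply_update (fun _ => eval Pol β)]

theorem eval_nonneg (hml : ∀ f, IsNatMultilinear (Pol f)) {β : ℕ → ℝ} (hβ : ∀ n, 0 ≤ β n)
    (t : PTerm F ar) : 0 ≤ eval Pol β t := by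
  induction t with
  | var n => exact hβ n
  | app f ts ih => exact (hml f).nonneg ih

theorem exists_eval_natCast_eq (hml : ∀ f, IsNatMultilinear (Pol f)) (α : ℕ → ℕ)
    (t : PTerm F ar) : ∃ m : ℕ, eval Pol (fun n => (α n : ℝ)) t = m := by
  induction t with
  | var n => exact ⟨α n, rfl⟩
  | app f ts ih =>
    choose m hm using ih
    obtain ⟨k, hk⟩ := (hml f).exists_apply_natCast_eq m
    exact ⟨k, by simp only [eval, hm, hk]⟩

theorem RewriteAt.sum_mul_eval_le (hml : ∀ f, IsNatMultilinear (Pol f))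
    (hmono : ∀ (f : F) (x y : Fin (ar f) → ℝ), (∀ i, 0 ≤ x i) →
      (∀ i, x i ≤ y i) → Pol f x ≤ Pol f y)
    {k : ℕ} {p : Fin k → ℝ} (hp : ∀ j, 0 ≤ p j) (hps : ∑ j, p j = 1)
    {β : ℕ → ℝ} (hβ : ∀ n, 0 ≤ β n) {u : PTerm F ar} {v : Fin k → PTerm F ar}
    (hroot : ∑ j, p j * eval Pol β (v j) ≤ eval Pol β u)
    {s : PTerm F ar} {t : Fin k → PTerm F ar} (h : RewriteAt u v s t) :
    ∑ j, p j * eval Pol β (t j) ≤ eval Pol β s := by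
  induction h with
  | root => exact hroot
  | congr f ts i ti' _ ih =>
    set x : Fin (ar f) → ℝ := fun i' => eval Pol β (ts i')
    have hx : ∀ i', 0 ≤ x i' := fun i' => eval_nonneg hml hβ (ts i')
    have hmean : 0 ≤ ∑ j, p j * eval Pol β (ti' j) :=
      Finset.sum_nonneg fun j _ => mul_nonneg (hp j) (eval_nonneg hml hβ (ti' j))
    calc ∑ j, p j * eval Pol β (app f (Function.update ts i (ti' j)))
        = Pol f (Function.update x i (∑ j, p j * eval Pol β (ti' j))) := by
          simp only [eval_app_update]
          exact (hml f).sum_mul_update x i p hps _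
      _ ≤ Pol f (Function.update x i (x i)) := by
          refine hmono f _ _ (fun i' => ?_) (fun i' => ?_)
          · rcases eq_or_ne i' i with rfl | hi
            · simpa using hmean
            · simpa [hi] using hx i'
          · rcases eq_or_ne i' i with rfl | hi
            · simpa using ih
            · simp [hi]
      _ = eval Pol β (app f ts) := by rw [Function.update_eq_self]; rfl

end PTerm


theorem stmt_16 {F : Type} {ar : F → ℕ}
    (Pol : (f : F) → (Fin (ar f) → ℝ) → ℝ)
    -- each `Pol f` is a multilinear polynomial with coefficients in ℕ
    (hml : ∀ f : F, ∃ c : Finset (Fin (ar f)) → ℕ,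
      ∀ x : Fin (ar f) → ℝ,
        Pol f x = ∑ S : Finset (Fin (ar f)), (c S : ℝ) * ∏ i ∈ S, x i)
    -- each `Pol f` is weakly monotonic (on nonnegative arguments)
    (hmono : ∀ (f : F) (x y : Fin (ar f) → ℝ), (∀ i, 0 ≤ x i) →
      (∀ i, x i ≤ y i) → Pol f x ≤ Pol f y)
    {k : ℕ} (p : Fin k → ℝ) (hp : ∀ j, 0 ≤ p j) (hps : ∑ j, p j = 1)
    (lhs : PTerm F ar) (rhs : Fin k → PTerm F ar) (σ : ℕ → PTerm F ar)
    -- the rule `ℓ → {p₁:r₁,...,p_k:r_k}` is weakly decreasing in expectation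
    -- for all natural-number instantiations of the variables
    (hrule : ∀ α : ℕ → ℕ,
      ∑ j, p j * PTerm.eval Pol (fun n => ((α n : ℕ) : ℝ)) (rhs j) ≤
        PTerm.eval Pol (fun n => ((α n : ℕ) : ℝ)) lhs)
    (s : PTerm F ar) (t : Fin k → PTerm F ar)
    -- `s` rewrites to `{p₁:t₁,...,p_k:t_k}` using the rule at some position
    (hrw : PTerm.RewriteAt (PTerm.subst σ lhs)
      (fun j => PTerm.subst σ (rhs j)) s t) :
    ∀ α : ℕ → ℕ,
      ∑ j, p j * PTerm.eval Pol (fun n => ((α n : ℕ) : ℝ)) (t j) ≤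
        PTerm.eval Pol (fun n => ((α n : ℕ) : ℝ)) s := by
  intro α
  refine hrw.sum_mul_eval_le hml hmono hp hps (fun n => Nat.cast_nonneg (α n)) ?_
  choose m hm using fun n => PTerm.exists_eval_natCast_eq hml α (σ n)
  simpa only [PTerm.eval_subst, hm] using hrule m
end

section
/- There is no monotonic polynomial interpretation Pol over ℕ (x > y implies f_Pol(...,x,...) > f_Pol(...,y,...)) with Pol(0) ∈ ℕ, Pol(s(x)) given by a monotonic polynomial, satisfying Pol(div(s(x), s(y))) > Pol(s(div(minus(x,y), s(y)))) for all x, y ∈ ℕ. More precisely, if Pol is monotonic then instantiating y := s(x) and using that Pol(minus(x, s(x))) ≥ Pol(s(x)) (which follows from the weak subterm property of monotonic polynomial interpretations over ℕ) leads to Pol(div(s(x), s²(x))) > Pol(div(s(x), s²(x))), a contradiction. -/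
/-- There is no strictly monotonic interpretation with the weak subterm property
(as every monotonic polynomial interpretation over ℕ has) that makes the rule
`div(s(x),s(y)) → s(div(minus(x,y),s(y)))` strictly decreasing. -/
theorem stmt_18 (D : ℕ → ℕ → ℕ) (S : ℕ → ℕ) (M : ℕ → ℕ → ℕ)
    (hSmono : ∀ a b, a < b → S a < S b)
    (hDmono1 : ∀ a b c, a < b → D a c < D b c)
    (hDmono2 : ∀ a b c, b < c → D a b < D a c)
    (hMmono1 : ∀ a b c, a < b → M a c < M b c)
    (hMmono2 : ∀ a b c, b < c → M a b < M a c)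
    (hSsub : ∀ z, z ≤ S z)
    (hMsub1 : ∀ a b, a ≤ M a b) (hMsub2 : ∀ a b, b ≤ M a b)
    (hDsub1 : ∀ a b, a ≤ D a b) (hDsub2 : ∀ a b, b ≤ D a b)
    (hrule : ∀ x y, S (D (M x y) (S y)) < D (S x) (S y)) :
    False := by
  have h := hrule 0 (S 0)
  have h1 : S 0 ≤ M 0 (S 0) := hMsub2 0 (S 0)
  have h2 : D (S 0) (S (S 0)) ≤ D (M 0 (S 0)) (S (S 0)) := by
    rcases h1.lt_or_eq with hlt | heq
    · exact (hDmono1 _ _ _ hlt).le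
    · exact le_of_eq (congrArg (fun t => D t (S (S 0))) heq)
  have h3 : D (M 0 (S 0)) (S (S 0)) ≤ S (D (M 0 (S 0)) (S (S 0))) := hSsub _
  omega
end
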